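/- Let K be a field and f ∈ K[[t]]. Then f is rational, i.e. there exist polynomials g, h ∈ K[t] with g ≠ 0 and g·f = h, if and only if f is determinantally rational. -/

import Mathlib

/-!
If `g * f = h`, the reversed coefficient vector of `g` lies in the kernel of every Hankel matrix
of size `deg g + 1` starting beyond `deg h`.

Conversely, let the Hankel determinants of size `m + 1` vanish from some point on. If those of
size `m` are eventually nonzero, every window `i` carries a linear recurrence of order `m` valid
on the equations `i, …, i + m`; it is unique, and consecutive windows share `m` equations, so one
recurrence holds eventually, which makes `f` rational. Otherwise a Hankel determinant of size `m`
vanishes; since Hankel matrices are symmetric, this zero propagates to all later starting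
indices, and we conclude by induction on `m`.
-/

open Finset

namespace Matrix

section Hankel

variable {α : Type*}

def hankel (a : ℕ → α) (s i : ℕ) : Matrix (Fin s) (Fin s) α :=
  of fun j k => a (i + j + k)

@[simp]
theorem hankel_apply (a : ℕ → α) (s i : ℕ) (j k : Fin s) :
    hankel a s i j k = a (i + j + k) :=
  rfl

theorem hankel_transpose (a : ℕ → α) (s i : ℕ) : (hankel a s i)ᵀ = hankel a s i := by
  ext j k
  simp [add_right_comm]

theorem hankel_submatrix_castSucc (a : ℕ → α) (s i : ℕ) :
    (hankel a (s + 1) i).submatrix Fin.castSucc Fin.castSucc = hankel a s i :=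
  rfl

theorem hankel_submatrix_succ_castSucc (a : ℕ → α) (s i : ℕ) :
    (hankel a (s + 1) i).submatrix Fin.succ Fin.castSucc = hankel a s (i + 1) := by
  ext j k
  simp [add_right_comm, add_assoc]

end Hankel

section Domain

variable {R : Type*} [CommRing R] [IsDomain R]

theorem det_submatrix_castSucc_eq_zero {m : Type*} {n : ℕ}
    (B : Matrix m (Fin (n + 1)) R) (r : Fin n → m) {z : Fin (n + 1) → R} (hz : z ≠ 0)
    (hlast : z (Fin.last n) = 0) (hBz : ∀ j, (B *ᵥ z) (r j) = 0) :
    (B.submatrix r Fin.castSucc).det = 0 := by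
  rw [← exists_mulVec_eq_zero_iff]
  refine ⟨Fin.init z, fun h => hz (funext fun j => ?_), funext fun j => ?_⟩
  · induction j using Fin.lastCases with
    | last => exact hlast
    | cast j => exact congrFun h j
  · rw [Pi.zero_apply, ← hBz j]
    simp [mulVec, dotProduct, Fin.sum_univ_castSucc, hlast, Fin.init]

theorem det_hankel_shift_eq_zero (a : ℕ → R) (s l : ℕ) (hbig : (hankel a (s + 2) l).det = 0)
    (h : (hankel a (s + 1) l).det = 0) : (hankel a (s + 1) (l + 1)).det = 0 := by
  set B := hankel a (s + 2) l
  suffices ∃ z ≠ 0, z (Fin.last _) = 0 ∧ ∀ j : Fin (s + 1), (B *ᵥ z) j.succ = 0 by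
    obtain ⟨z, hz, hlast, hBz⟩ := this
    rw [← hankel_submatrix_succ_castSucc]
    exact det_submatrix_castSucc_eq_zero B Fin.succ hz hlast hBz
  obtain ⟨v, hv, hHv⟩ := exists_mulVec_eq_zero_iff.mpr h
  set w : Fin (s + 2) → R := Fin.snoc v 0
  have hBw : ∀ j : Fin (s + 1), (B *ᵥ w) j.castSucc = 0 := fun j => by
    simpa [B, w, mulVec, dotProduct, Fin.sum_univ_castSucc] using congrFun hHv j
  by_cases hγ : (B *ᵥ w) (Fin.last _) = 0
  · refine ⟨w, fun hw => hv ?_, Fin.snoc_last _ _, fun j => ?_⟩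
    · have hinit := congrArg Fin.init hw
      rwa [Fin.init_snoc] at hinit
    · induction j.succ using Fin.lastCases with
      | last => exact hγ
      | cast j => exact hBw j
  · obtain ⟨z, hz, hBz⟩ := exists_mulVec_eq_zero_iff.mpr hbig
    -- `B` is symmetric, so `B w ⬝ᵥ z = w ⬝ᵥ B z = 0`, and `B w` vanishes off the last entry.
    have hlast : z (Fin.last _) = 0 := by
      have hwBz : (B *ᵥ w) ⬝ᵥ z = w ⬝ᵥ (B *ᵥ z) := by
        rw [dotProduct_mulVec, ← vecMul_transpose, hankel_transpose]
      rw [hBz, dotProduct_zero, dotProduct, Fin.sum_univ_castSucc] at hwBz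
      simpa [hBw, hγ] using hwBz
    exact ⟨z, hz, hlast, fun j => by rw [hBz, Pi.zero_apply]⟩

theorem eq_of_recurrence_of_det_hankel_ne_zero {a : ℕ → R} {M i : ℕ}
    (h : (hankel a M i).det ≠ 0) {c c' : Fin M → R}
    (hc : ∀ j < M, a (i + j + M) = ∑ k, c k * a (i + j + k))
    (hc' : ∀ j < M, a (i + j + M) = ∑ k, c' k * a (i + j + k)) : c = c' := by
  have hmulVec : ∀ d : Fin M → R, (∀ j < M, a (i + j + M) = ∑ k, d k * a (i + j + k)) →
      hankel a M i *ᵥ d = fun j : Fin M => a (i + j + M) := fun d hd =>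
    funext fun j => by simp [mulVec, dotProduct, hd j j.isLt, mul_comm]
  exact sub_eq_zero.mp <| eq_zero_of_mulVec_eq_zero h <| by
    rw [mulVec_sub, hmulVec c hc, hmulVec c' hc', sub_self]

end Domain

section Field

variable {K : Type*} [Field K]

theorem exists_recurrence_of_det_hankel {a : ℕ → K} {M i : ℕ}
    (hsucc : (hankel a (M + 1) i).det = 0) (h : (hankel a M i).det ≠ 0) :
    ∃ c : Fin M → K, ∀ j ≤ M, a (i + j + M) = ∑ k, c k * a (i + j + k) := by
  obtain ⟨z, hz, hHz⟩ := exists_mulVec_eq_zero_iff.mpr hsucc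
  have hlast : z (Fin.last M) ≠ 0 := fun hlast => h <| by
    rw [← hankel_submatrix_castSucc]
    exact det_submatrix_castSucc_eq_zero _ _ hz hlast fun j => congrFun hHz j.castSucc
  refine ⟨fun k => -z k.castSucc / z (Fin.last M), fun j hj => ?_⟩
  have hrow := congrFun hHz ⟨j, by omega⟩
  simp only [mulVec, dotProduct, hankel_apply, Fin.sum_univ_castSucc, Fin.val_castSucc,
    Fin.val_last, Pi.zero_apply] at hrow
  have hsum : ∑ k : Fin M, -z k.castSucc / z (Fin.last M) * a (i + j + k)
      = -(∑ k : Fin M, a (i + j + k) * z k.castSucc) / z (Fin.last M) := by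
    rw [neg_div, sum_div, ← sum_neg_distrib]
    exact sum_congr rfl fun k _ => by ring
  rw [hsum, eq_div_iff hlast]
  linear_combination hrow

theorem exists_recurrence_of_forall_det_hankel {a : ℕ → K} {M n : ℕ}
    (hne : ∀ i > n, (hankel a M i).det ≠ 0) (hzero : ∀ i > n, (hankel a (M + 1) i).det = 0) :
    ∃ c : Fin M → K, ∀ q > n, a (q + M) = ∑ k, c k * a (q + k) := by
  choose! C hC using fun i (hi : i > n) =>
    exists_recurrence_of_det_hankel (hzero i hi) (hne i hi)
  have hconst : ∀ i > n, C i = C (n + 1) := by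
    intro i hi
    induction i, hi using Nat.le_induction with
    | base => rfl
    | succ i hi ih =>
      rw [← ih]
      refine eq_of_recurrence_of_det_hankel_ne_zero (hne (i + 1) (by omega))
        (fun j hj => hC _ (by omega) j hj.le) fun j hj => ?_
      simpa [add_right_comm, add_assoc] using hC i hi (j + 1) hj
  exact ⟨C (n + 1), fun q hq => by simpa [hconst q hq] using hC q hq 0 (Nat.zero_le M)⟩

end Field

end Matrix

namespace PowerSeries

section CommRing

variable {R : Type*} [CommRing R]

def IsRational (f : PowerSeries R) : Prop :=
  ∃ g h : Polynomial R, g ≠ 0 ∧ (g : PowerSeries R) * f = h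

theorem coeff_coe_mul_eq_sum {g : Polynomial R} {m : ℕ} (hg : g.natDegree ≤ m)
    (f : PowerSeries R) (N : ℕ) :
    coeff (N + m) ((g : PowerSeries R) * f) =
      ∑ k ∈ range (m + 1), g.coeff (m - k) * coeff (N + k) f := by
  conv_lhs => rw [g.as_sum_range_C_mul_X_pow' (Nat.lt_succ_of_le hg)]
  rw [← sum_range_reflect]
  simp only [← Polynomial.coeToPowerSeries.ringHom_apply, map_sum, map_mul, map_pow, sum_mul]
  refine sum_congr rfl fun k hk => ?_
  rw [mem_range] at hk
  simp only [Polynomial.coeToPowerSeries.ringHom_apply, Polynomial.coe_C, Polynomial.coe_X,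
    mul_assoc, coeff_C_mul, coeff_X_pow_mul']
  rw [if_pos (by omega), show m.succ - 1 - k = m - k by omega,
    show N + m - (m - k) = N + k by omega]

theorem isRational_of_eventually_recurrence [Nontrivial R] (f : PowerSeries R) {M n : ℕ}
    (c : Fin M → R) (hrec : ∀ q > n, coeff (q + M) f = ∑ k, c k * coeff (q + k) f) :
    f.IsRational := by
  -- the reversed characteristic polynomial of the recurrence
  let g : Polynomial R := 1 - ∑ k : Fin M, Polynomial.C (c k) * Polynomial.X ^ (M - k)
  have hg : g.coeff 0 = 1 := by
    simp only [g, Polynomial.coeff_sub, Polynomial.coeff_one_zero, Polynomial.finsetSum_coeff,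
      Polynomial.coeff_C_mul_X_pow]
    rw [sum_eq_zero fun k _ => if_neg (by omega), sub_zero]
  have hcoe : (g : PowerSeries R) = 1 - ∑ k : Fin M, C (c k) * X ^ (M - k) := by
    simp only [g, ← Polynomial.coeToPowerSeries.ringHom_apply, map_sub, map_one, map_sum, map_mul,
      map_pow]
    simp only [Polynomial.coeToPowerSeries.ringHom_apply, Polynomial.coe_C, Polynomial.coe_X]
  have hvanish : ∀ N > n + M, coeff N ((g : PowerSeries R) * f) = 0 := by
    intro N hN
    obtain ⟨q, rfl⟩ : ∃ q, N = q + M := ⟨N - M, by omega⟩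
    rw [hcoe, sub_mul, one_mul, map_sub, hrec q (by omega), sum_mul, map_sum, sub_eq_zero]
    refine sum_congr rfl fun k _ => ?_
    rw [mul_assoc, coeff_C_mul, coeff_X_pow_mul', if_pos (by omega),
      show q + M - (M - k) = q + k by omega]
  refine ⟨g, trunc (n + M + 1) ((g : PowerSeries R) * f), fun h => by simp [h] at hg, ?_⟩
  ext N
  rw [Polynomial.coeff_coe, coeff_trunc]
  split_ifs with hN
  · rfl
  · exact hvanish N (by omega)

theorem det_hankel_eq_zero_of_mul_eq [IsDomain R] {f : PowerSeries R} {g h : Polynomial R}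
    (hg : g ≠ 0) (hgf : (g : PowerSeries R) * f = h) {i : ℕ} (hi : h.natDegree < i) :
    (Matrix.hankel (fun N => coeff N f) (g.natDegree + 1) i).det = 0 := by
  rw [← Matrix.exists_mulVec_eq_zero_iff]
  refine ⟨fun k => g.coeff (g.natDegree - k), fun hv => hg ?_, funext fun j => ?_⟩
  · simpa using congrFun hv 0
  · have hcoeff := coeff_coe_mul_eq_sum (le_refl g.natDegree) f (i + j)
    rw [hgf, Polynomial.coeff_coe, Polynomial.coeff_eq_zero_of_natDegree_lt (by omega)] at hcoeff
    simp only [Matrix.mulVec, dotProduct, Matrix.hankel_apply, Pi.zero_apply]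
    rw [hcoeff,
      Fin.sum_univ_eq_sum_range (fun k => coeff (i + j + k) f * g.coeff (g.natDegree - k))]
    exact sum_congr rfl fun k _ => mul_comm _ _

end CommRing

section Field

open Matrix

variable {K : Type*} [Field K]

theorem isRational_of_forall_det_hankel {f : PowerSeries K} {M n : ℕ}
    (hne : ∀ i > n, (hankel (fun N => coeff N f) M i).det ≠ 0)
    (hzero : ∀ i > n, (hankel (fun N => coeff N f) (M + 1) i).det = 0) : f.IsRational :=
  have ⟨c, hc⟩ := exists_recurrence_of_forall_det_hankel hne hzero
  isRational_of_eventually_recurrence f c hc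

theorem isRational_of_det_hankel_eq_zero (f : PowerSeries K) (m n : ℕ)
    (h : ∀ i > n, (hankel (fun N => coeff N f) (m + 1) i).det = 0) : f.IsRational := by
  induction m generalizing n with
  | zero => exact isRational_of_forall_det_hankel (fun i _ => by simp) h
  | succ m ih =>
    by_cases hne : ∀ i > n, (hankel (fun N => coeff N f) (m + 1) i).det ≠ 0
    · exact isRational_of_forall_det_hankel hne h
    push Not at hne
    obtain ⟨j, hj, hdet⟩ := hne
    have hprop : ∀ i ≥ j, (hankel (fun N => coeff N f) (m + 1) i).det = 0 := by
      intro i hi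
      induction i, hi using Nat.le_induction with
      | base => exact hdet
      | succ i hi ih => exact det_hankel_shift_eq_zero _ m i (h i (by omega)) ih
    exact ih j fun i hi => hprop i hi.le

end Field

end PowerSeries

/-- A formal power series `f = Σ aᵢ tⁱ ∈ A[[t]]` is *determinantally rational* if there exist
`m n : ℕ` such that for all `i > n` the `(m+1)×(m+1)` Hankel determinant
`det (a_{i+j+k})_{0 ≤ j,k ≤ m}` vanishes. -/
def DeterminantallyRational {A : Type*} [CommRing A] (f : PowerSeries A) : Prop :=
  ∃ m n : ℕ, ∀ i > n,
    Matrix.det (Matrix.of fun j k : Fin (m + 1) =>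
      PowerSeries.coeff (i + j.1 + k.1) f) = 0

/-- Over a field, a power series is rational (a ratio of polynomials) if and only if it is
determinantally rational. -/
theorem rational_iff_determinantallyRational {K : Type*} [Field K] (f : PowerSeries K) :
    (∃ g h : Polynomial K, g ≠ 0 ∧
      (g : PowerSeries K) * f = (h : PowerSeries K)) ↔
    DeterminantallyRational f := by
  constructor
  · rintro ⟨g, h, hg, hgf⟩
    exact ⟨g.natDegree, h.natDegree, fun i hi => f.det_hankel_eq_zero_of_mul_eq hg hgf hi⟩
  · rintro ⟨m, n, h⟩
    exact f.isRational_of_det_hankel_eq_zero m n h
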